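/- arXiv:1702.03029 — 5 statements merged into one kernel-verified Lean document; each statement's English description precedes it below -/
import Mathlib

section
/- Suppose the block operator matrix L is a bijection of X^n. Then the operator I − G is a bijection of X, where G = Σ_{i=1}^n G_i. -/
/-!
Applying `I - Gᵢ` to the `i`-th row of `L` gives `(I - Gᵢ)(Lφ)ᵢ = φᵢ - Gᵢ(∑ₖ φₖ)`, so `L` is
conjugate, through the bijection `diag(I - Gᵢ)`, to `I - C ∘ Σ`, where `C x = (Gᵢ x)ᵢ` and
`Σ φ = ∑ₖ φₖ`. Since `Σ ∘ C = G`, the claim is the bijective case of the familiar fact that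
`I - AB` and `I - BA` are invertible together.
-/

open Finset

theorem one_sub_mul_eq_neg_of_one_sub_mul_one_sub {R : Type*} [Ring R] {a b : R}
    (h : (1 - a) * (1 - b) = 1) : (1 - a) * b = -a := by
  have e : (1 - a) * b = (1 - a) - (1 - a) * (1 - b) := by noncomm_ring
  rw [e, h]
  abel

section OneSubComp

variable {R M N : Type*} [Ring R] [AddCommGroup M] [Module R M] [AddCommGroup N] [Module R N]

/-- The inverse is `(1 - g f)⁻¹ = 1 + g (1 - f g)⁻¹ f`. -/
theorem LinearMap.bijective_one_sub_comp_of_bijective_one_sub_comp {f : M →ₗ[R] N}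
    {g : N →ₗ[R] M} (h : Function.Bijective (1 - f ∘ₗ g : Module.End R N)) :
    Function.Bijective (1 - g ∘ₗ f : Module.End R M) := by
  constructor
  · refine (injective_iff_map_eq_zero (1 - g ∘ₗ f : Module.End R M)).mpr fun x hx => ?_
    have hx : x = g (f x) := sub_eq_zero.mp hx
    have hfx : f x = 0 := h.injective <| by
      simp only [sub_apply, Module.End.one_apply, comp_apply, map_zero, sub_eq_zero]
      exact congrArg f hx
    rw [hx, hfx, map_zero]
  · intro y
    obtain ⟨z, hz⟩ := h.surjective (f y)
    have hz : z - f (g z) = f y := hz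
    refine ⟨y + g z, ?_⟩
    calc (1 - g ∘ₗ f) (y + g z) = y + g (z - f (g z) - f y) := by
          simp only [sub_apply, Module.End.one_apply, comp_apply, map_add, map_sub]
          abel
      _ = y := by rw [hz, sub_self, map_zero, add_zero]

end OneSubComp

theorem one_sub_apply_add_apply_sum_erase {R X ι : Type*} [Ring R] [AddCommGroup X] [Module R X]
    [Fintype ι] [DecidableEq ι] {G Γ : ι → Module.End R X}
    (hΓ : ∀ i, (1 - G i) * (1 - Γ i) = 1) (φ : ι → X) (i : ι) :
    (1 - G i) (φ i + Γ i (∑ k ∈ univ.erase i, φ k)) = φ i - G i (∑ k, φ k) := by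
  have hGΓ : ∀ x, (1 - G i) (Γ i x) = -G i x := fun x =>
    LinearMap.congr_fun (one_sub_mul_eq_neg_of_one_sub_mul_one_sub (hΓ i)) x
  rw [map_add, hGΓ, ← add_sum_erase _ _ (mem_univ i), map_add]
  simp only [LinearMap.sub_apply, Module.End.one_apply]
  abel

theorem stmt_0_general {X : Type*} [AddCommGroup X] [Module ℂ X] (n : ℕ)
    (G Γ : Fin n → Module.End ℂ X)
    (hΓ : ∀ i, (1 - G i) * (1 - Γ i) = 1 ∧ (1 - Γ i) * (1 - G i) = 1)
    (hL : Function.Bijective (fun φ : Fin n → X =>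
      fun i => φ i + Γ i (∑ k ∈ Finset.univ.erase i, φ k))) :
    Function.Bijective ⇑(1 - ∑ i, G i : Module.End ℂ X) := by
  let C : X →ₗ[ℂ] Fin n → X := LinearMap.pi G
  let S : (Fin n → X) →ₗ[ℂ] X := ∑ k, (LinearMap.proj k : (Fin n → X) →ₗ[ℂ] X)
  have hdiag : Function.Bijective (Pi.map fun i => ⇑(1 - G i : Module.End ℂ X)) :=
    Function.Bijective.piMap fun i =>
      (Module.End.isUnit_iff _).mp ⟨⟨1 - G i, 1 - Γ i, (hΓ i).1, (hΓ i).2⟩, rfl⟩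
  have hCS : Function.Bijective (1 - C ∘ₗ S : Module.End ℂ (Fin n → X)) := by
    convert hdiag.comp hL using 1
    funext φ i
    rw [Function.comp_apply, Pi.map_apply, one_sub_apply_add_apply_sum_erase (fun i => (hΓ i).1)]
    simp [C, S]
  convert LinearMap.bijective_one_sub_comp_of_bijective_one_sub_comp hCS using 2
  ext x
  simp [C, S]

/-- Let `X` be a complex vector space, `n ≥ 1`, and for each `i`
let `G i : X → X` be linear with `I - G i` bijective, with reflection operators `Γ i`
defined by `I - Γ i = (I - G i)⁻¹`.  If the block operator matrix
`L : Xⁿ → Xⁿ`, `(L φ) i = φ i + Γ i (∑_{k ≠ i} φ k)`, is a bijection of `Xⁿ`,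
then `I - G` is a bijection of `X`, where `G = ∑ i, G i`. -/
theorem stmt_0 {X : Type*} [AddCommGroup X] [Module ℂ X] (n : ℕ) (hn : 1 ≤ n)
    (G Γ : Fin n → Module.End ℂ X)
    (hΓ : ∀ i, (1 - G i) * (1 - Γ i) = 1 ∧ (1 - Γ i) * (1 - G i) = 1)
    (hL : Function.Bijective (fun φ : Fin n → X =>
      fun i => φ i + Γ i (∑ k ∈ Finset.univ.erase i, φ k))) :
    Function.Bijective ⇑(1 - ∑ i, G i : Module.End ℂ X) :=
  stmt_0_general n G Γ hΓ hL
end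

section
/- Suppose the block operator matrix L is a bijection of X^n, and let γ = (γ_{ij})_{i,j=1}^n be the unique operator matrix solving L·γ = diag(Γ_1,…,Γ_n), i.e. γ_{ij} + Γ_i Σ_{k≠i} γ_{kj} = δ_{ij} Γ_i for all i,j. Then the components also satisfy γ_{ij} = Γ_i(δ_{ij} I − Σ_{k≠i} γ_{kj}) = (δ_{ij} I − Σ_{k≠j} γ_{ik}) Γ_j, the operator I − G is bijective, and the operator Γ defined by I − Γ = (I − G)^{−1} is given by Γ = Σ_{1≤i,j≤n} γ_{ij}. -/
/-!
Writing `I - Γᵢ = (I - Gᵢ)⁻¹` as `(I - Gᵢ) Γᵢ = -Gᵢ`, the defining system for `γ` solves to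
`γᵢⱼ = Gᵢ (sⱼ - δᵢⱼ)` with `sⱼ = ∑ₖ γₖⱼ`, so summing over `i` gives `(I - G) sⱼ = -Gⱼ`. Hence
`sⱼ = -(I - G)⁻¹ Gⱼ` and `∑ᵢⱼ γᵢⱼ = -(I - G)⁻¹ G = I - (I - G)⁻¹`; the same formulas give the row
sums `∑ⱼ γᵢⱼ = -Gᵢ (I - G)⁻¹` and the transposed system. Bijectivity of `I - G` comes from that of
`L`: with `Q x = (Gᵢ x)ᵢ` and `P φ = ∑ₖ φₖ`, one has `diag(I - Gᵢ) ∘ L = I - Q P`, while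
`I - G = I - P Q`, and `I - Q P` is bijective iff `I - P Q` is.
-/

open Finset

section Reflection

variable {R : Type*} [Ring R]

theorem one_sub_mul_eq_neg_of_one_sub_mul_one_sub_s1 {g r : R} (h : (1 - g) * (1 - r) = 1) :
    (1 - g) * r = -g :=
  calc (1 - g) * r = (1 - g) - (1 - g) * (1 - r) := by noncomm_ring
    _ = -g := by rw [h]; abel

theorem eq_mul_sub_of_add_mul_sub_eq {g r c s d : R} (hgr : (1 - g) * (1 - r) = 1)
    (h : c + r * (s - c) = r * d) : c = g * (s - d) :=
  calc c = (1 - g) * (1 - r) * c := by rw [hgr, one_mul]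
    _ = (1 - g) * (c + r * (s - c) - r * s) := by noncomm_ring
    _ = (1 - g) * r * (d - s) := by rw [h]; noncomm_ring
    _ = g * (s - d) := by rw [one_sub_mul_eq_neg_of_one_sub_mul_one_sub_s1 hgr]; noncomm_ring

theorem eq_sub_sub_mul_of_eq_sub_mul {g r c t d : R} (hgr : (1 - g) * (1 - r) = 1)
    (h : c = (t - d) * g) : c = (d - (t - c)) * r :=
  calc c = (d - t) * ((1 - g) * r) := by
        rw [one_sub_mul_eq_neg_of_one_sub_mul_one_sub_s1 hgr, h]; noncomm_ring
    _ = (d - (t - c)) * r := by rw [h]; noncomm_ring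

end Reflection

section System

variable {ι R : Type*} [Fintype ι] [DecidableEq ι] [Ring R] {g r : ι → R} {c : ι → ι → R}
  {h : R}

theorem eq_mul_colSum_sub (hgr : ∀ i, (1 - g i) * (1 - r i) = 1)
    (hc : ∀ i j, c i j + r i * ∑ k ∈ univ.erase i, c k j = if i = j then r i else 0)
    (i j : ι) : c i j = g i * (∑ k, c k j - if i = j then 1 else 0) := by
  refine eq_mul_sub_of_add_mul_sub_eq (hgr i) ?_
  rw [mul_boole, ← sum_erase_eq_sub (mem_univ i)]
  exact hc i j

variable (hcol : ∀ i j, c i j = g i * (∑ k, c k j - if i = j then 1 else 0))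
include hcol

theorem one_sub_sum_mul_colSum (j : ι) : (1 - ∑ i, g i) * ∑ k, c k j = -g j := by
  have hs : ∑ k, c k j = (∑ i, g i) * ∑ k, c k j - g j := by
    conv_lhs => rw [sum_congr rfl fun i _ => hcol i j]
    simp only [mul_sub, sum_sub_distrib, ← sum_mul, mul_boole, sum_ite_eq', mem_univ, if_true]
  rw [sub_mul, one_mul, sub_eq_iff_eq_add, neg_add_eq_sub]
  exact hs

variable (hh : h * (1 - ∑ i, g i) = 1)
include hh

theorem colSum_eq_neg_mul (j : ι) : ∑ k, c k j = -(h * g j) :=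
  calc ∑ k, c k j = h * ((1 - ∑ i, g i) * ∑ k, c k j) := by rw [← mul_assoc, hh, one_mul]
    _ = -(h * g j) := by rw [one_sub_sum_mul_colSum hcol, mul_neg]

theorem sum_colSum_eq_one_sub : ∑ j, ∑ k, c k j = 1 - h := by
  simp_rw [colSum_eq_neg_mul hcol hh, sum_neg_distrib, ← mul_sum]
  rw [← hh]
  noncomm_ring

theorem rowSum_eq_neg_mul (i : ι) : ∑ j, c i j = -(g i * h) :=
  calc ∑ j, c i j = g i * (∑ j, ∑ k, c k j - 1) := by
        rw [sum_congr rfl fun j _ => hcol i j, ← mul_sum, sum_sub_distrib]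
        simp
    _ = -(g i * h) := by rw [sum_colSum_eq_one_sub hcol hh]; noncomm_ring

theorem eq_rowSum_sub_mul (i j : ι) : c i j = (∑ k, c i k - if i = j then 1 else 0) * g j := by
  rw [rowSum_eq_neg_mul hcol hh, hcol i j, colSum_eq_neg_mul hcol hh]
  split_ifs with hij
  · subst hij; noncomm_ring
  · noncomm_ring

theorem eq_sub_sum_erase_mul (hgr : ∀ i, (1 - g i) * (1 - r i) = 1) (i j : ι) :
    c i j = ((if i = j then 1 else 0) - ∑ k ∈ univ.erase j, c i k) * r j := by
  have := eq_sub_sub_mul_of_eq_sub_mul (hgr j) (eq_rowSum_sub_mul hcol hh i j)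
  rwa [← sum_erase_eq_sub (mem_univ j)] at this

end System

theorem LinearMap.bijective_id_sub_comp_of_bijective {R M N : Type*} [Semiring R]
    [AddCommGroup M] [AddCommGroup N] [Module R M] [Module R N] (f : M →ₗ[R] N) (g : N →ₗ[R] M)
    (h : Function.Bijective ⇑(1 - g ∘ₗ f : Module.End R M)) :
    Function.Bijective ⇑(1 - f ∘ₗ g : Module.End R N) := by
  constructor
  · refine (injective_iff_map_eq_zero _).2 fun u hu => ?_
    have hfg : f (g u) = u := (sub_eq_zero.1 hu).symm
    have hg : g u = 0 := (injective_iff_map_eq_zero _).1 h.1 (g u) (by simp [hfg])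
    rw [← hfg, hg, map_zero]
  · intro y
    obtain ⟨φ, hφ⟩ := h.2 (g y)
    have hgφ : g y + g (f φ) = φ := by
      simp only [LinearMap.sub_apply, Module.End.one_apply, LinearMap.comp_apply] at hφ
      rw [← hφ]; abel
    refine ⟨y + f φ, ?_⟩
    calc (1 - f ∘ₗ g) (y + f φ) = y + f φ - f (g y + g (f φ)) := by
          simp only [LinearMap.sub_apply, Module.End.one_apply, LinearMap.comp_apply, map_add]
          abel
      _ = y := by rw [hgφ, add_sub_cancel_right]


theorem bijective_one_sub_sum_of_bijective_reflection_system {ι R X : Type*} [Fintype ι]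
    [DecidableEq ι] [Ring R] [AddCommGroup X] [Module R X] {G Γ : ι → Module.End R X}
    (hΓ : ∀ i, (1 - G i) * (1 - Γ i) = 1 ∧ (1 - Γ i) * (1 - G i) = 1)
    (hL : Function.Bijective fun φ : ι → X => fun i => φ i + Γ i (∑ k ∈ univ.erase i, φ k)) :
    Function.Bijective ⇑(1 - ∑ i, G i) := by
  have hD : Function.Bijective (Pi.map fun i => ⇑(1 - G i)) :=
    .piMap fun i => (Module.End.isUnit_iff _).1 ⟨⟨_, _, (hΓ i).1, (hΓ i).2⟩, rfl⟩
  have hDL : (Pi.map fun i => ⇑(1 - G i)) ∘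
        (fun φ : ι → X => fun i => φ i + Γ i (∑ k ∈ univ.erase i, φ k)) =
      ⇑(1 - LinearMap.pi G ∘ₗ ∑ i, LinearMap.proj i : Module.End R (ι → X)) := by
    funext φ i
    have hGΓ := LinearMap.congr_fun (one_sub_mul_eq_neg_of_one_sub_mul_one_sub_s1 (hΓ i).1)
      (∑ k ∈ univ.erase i, φ k)
    simp only [Module.End.mul_apply, LinearMap.neg_apply] at hGΓ
    rw [Function.comp_apply, Pi.map_apply, map_add, hGΓ, ← add_sum_erase _ _ (mem_univ i)]
    simp
  convert LinearMap.bijective_id_sub_comp_of_bijective _ _ (hDL ▸ hD.comp hL)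
  ext x
  simp

theorem stmt_1_general {X : Type*} [AddCommGroup X] [Module ℂ X] (n : ℕ)
    (G Γ : Fin n → Module.End ℂ X)
    (hΓ : ∀ i, (1 - G i) * (1 - Γ i) = 1 ∧ (1 - Γ i) * (1 - G i) = 1)
    (hL : Function.Bijective (fun φ : Fin n → X =>
      fun i => φ i + Γ i (∑ k ∈ Finset.univ.erase i, φ k)))
    (γ : Fin n → Fin n → Module.End ℂ X)
    (hγ : ∀ i j, γ i j + Γ i * (∑ k ∈ Finset.univ.erase i, γ k j)
      = if i = j then Γ i else 0) :
    (∀ i j, γ i j = Γ i * ((if i = j then 1 else 0) - ∑ k ∈ Finset.univ.erase i, γ k j)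
      ∧ γ i j = ((if i = j then 1 else 0) - ∑ k ∈ Finset.univ.erase j, γ i k) * Γ j)
    ∧ Function.Bijective ⇑(1 - ∑ i, G i : Module.End ℂ X)
    ∧ ∀ Γtot : Module.End ℂ X,
        (1 - ∑ i, G i) * (1 - Γtot) = 1 → (1 - Γtot) * (1 - ∑ i, G i) = 1 →
        Γtot = ∑ i, ∑ j, γ i j := by
  have hGΓ i := (hΓ i).1
  have hcol := eq_mul_colSum_sub hGΓ hγ
  have hbij := bijective_one_sub_sum_of_bijective_reflection_system hΓ hL
  obtain ⟨H, hH⟩ := ((Module.End.isUnit_iff _).2 hbij).exists_left_inv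
  refine ⟨fun i j => ⟨?_, eq_sub_sum_erase_mul hcol hH hGΓ i j⟩, hbij, fun Γtot hΓtot _ => ?_⟩
  · rw [mul_sub, mul_boole, ← hγ i j, add_sub_cancel_right]
  · calc Γtot = 1 - H * ((1 - ∑ i, G i) * (1 - Γtot)) := by
          rw [← mul_assoc, hH, one_mul, sub_sub_cancel]
      _ = ∑ i, ∑ j, γ i j := by rw [hΓtot, mul_one, sum_comm, sum_colSum_eq_one_sub hcol hH]

/-- With `X` a complex vector space, `n ≥ 1`, `G i` linear with
`I - G i` bijective and reflection operators `Γ i` given by `I - Γ i = (I - G i)⁻¹`: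
if the block operator matrix `L` (diagonal `I`, row-`i` off-diagonal entries `Γ i`)
is a bijection of `Xⁿ` and `γ = (γ i j)` solves `L ⬝ γ = diag (Γ 1, …, Γ n)`,
i.e. `γ i j + Γ i * ∑_{k ≠ i} γ k j = δ_{ij} Γ i`, then
`γ i j = Γ i (δ_{ij} I - ∑_{k ≠ i} γ k j) = (δ_{ij} I - ∑_{k ≠ j} γ i k) Γ j`,
the operator `I - G` is bijective (`G = ∑ i, G i`), and the reflection operator `Γ`
defined by `I - Γ = (I - G)⁻¹` equals `∑_{i,j} γ i j`. -/
theorem stmt_1 {X : Type*} [AddCommGroup X] [Module ℂ X] (n : ℕ) (hn : 1 ≤ n)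
    (G Γ : Fin n → Module.End ℂ X)
    (hΓ : ∀ i, (1 - G i) * (1 - Γ i) = 1 ∧ (1 - Γ i) * (1 - G i) = 1)
    (hL : Function.Bijective (fun φ : Fin n → X =>
      fun i => φ i + Γ i (∑ k ∈ Finset.univ.erase i, φ k)))
    (γ : Fin n → Fin n → Module.End ℂ X)
    (hγ : ∀ i j, γ i j + Γ i * (∑ k ∈ Finset.univ.erase i, γ k j)
      = if i = j then Γ i else 0) :
    (∀ i j, γ i j = Γ i * ((if i = j then 1 else 0) - ∑ k ∈ Finset.univ.erase i, γ k j)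
      ∧ γ i j = ((if i = j then 1 else 0) - ∑ k ∈ Finset.univ.erase j, γ i k) * Γ j)
    ∧ Function.Bijective ⇑(1 - ∑ i, G i : Module.End ℂ X)
    ∧ ∀ Γtot : Module.End ℂ X,
        (1 - ∑ i, G i) * (1 - Γtot) = 1 → (1 - Γtot) * (1 - ∑ i, G i) = 1 →
        Γtot = ∑ i, ∑ j, γ i j :=
  stmt_1_general n G Γ hΓ hL γ hγ
end

section
/- For n = 2 the operator L : X² → X², L(φ₁,φ₂) = (φ₁ + Γ₁φ₂, φ₂ + Γ₂φ₁), is a bijection of X² if and only if I − Γ₁Γ₂ is a bijection of X; and in that case, writing G = G₁ + G₂, the operator I − G is bijective and the operator Γ defined by I − Γ = (I − G)^{−1} satisfies I − Γ = (I − Γ₂)(I − Γ₁Γ₂)^{−1}(I − Γ₁). -/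
/-- For `n = 2` the operator `L : X² → X²`,
`L (φ₁, φ₂) = (φ₁ + Γ₁ φ₂, φ₂ + Γ₂ φ₁)`, is a bijection of `X²` if and only if
`I - Γ₁ Γ₂` is a bijection of `X`; and in that case `I - G` is bijective
(`G = G₁ + G₂`) and the operator `Γ` defined by `I - Γ = (I - G)⁻¹` satisfies
`I - Γ = (I - Γ₂)(I - Γ₁Γ₂)⁻¹(I - Γ₁)`. -/
theorem stmt_3 {X : Type*} [AddCommGroup X] [Module ℂ X]
    (G₁ G₂ Γ₁ Γ₂ : Module.End ℂ X)
    (h₁ : (1 - G₁) * (1 - Γ₁) = 1 ∧ (1 - Γ₁) * (1 - G₁) = 1)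
    (h₂ : (1 - G₂) * (1 - Γ₂) = 1 ∧ (1 - Γ₂) * (1 - G₂) = 1) :
    (Function.Bijective (fun φ : X × X => (φ.1 + Γ₁ φ.2, φ.2 + Γ₂ φ.1))
      ↔ Function.Bijective ⇑(1 - Γ₁ * Γ₂ : Module.End ℂ X))
    ∧ (Function.Bijective (fun φ : X × X => (φ.1 + Γ₁ φ.2, φ.2 + Γ₂ φ.1)) →
        Function.Bijective ⇑(1 - (G₁ + G₂) : Module.End ℂ X)
        ∧ ∀ Γtot W : Module.End ℂ X,
            (1 - (G₁ + G₂)) * (1 - Γtot) = 1 → (1 - Γtot) * (1 - (G₁ + G₂)) = 1 →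
            (1 - Γ₁ * Γ₂) * W = 1 → W * (1 - Γ₁ * Γ₂) = 1 →
            1 - Γtot = (1 - Γ₂) * W * (1 - Γ₁)) := by
  -- abbreviations
  set U : Module.End ℂ X := 1 - Γ₁ * Γ₂ with hU
  -- key factorization
  have key : (1 - G₁) * U * (1 - G₂) = 1 - (G₁ + G₂) := by
    have e1 : (1 - G₁) * Γ₁ = -G₁ := by
      have h := h₁.1
      calc (1 - G₁) * Γ₁ = (1 - G₁) * 1 - (1 - G₁) * (1 - Γ₁) := by noncomm_ring
        _ = (1 - G₁) - 1 := by rw [h, mul_one]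
        _ = -G₁ := by noncomm_ring
    have e2 : Γ₂ * (1 - G₂) = -G₂ := by
      have h := h₂.2
      calc Γ₂ * (1 - G₂) = 1 * (1 - G₂) - (1 - Γ₂) * (1 - G₂) := by noncomm_ring
        _ = (1 - G₂) - 1 := by rw [h, one_mul]
        _ = -G₂ := by noncomm_ring
    calc (1 - G₁) * U * (1 - G₂)
        = (1 - G₁) * (1 - G₂) - ((1 - G₁) * Γ₁) * (Γ₂ * (1 - G₂)) := by
          rw [hU]; noncomm_ring
      _ = (1 - G₁) * (1 - G₂) - (-G₁) * (-G₂) := by rw [e1, e2]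
      _ = 1 - (G₁ + G₂) := by noncomm_ring
  -- the main iff
  have main : Function.Bijective (fun φ : X × X => (φ.1 + Γ₁ φ.2, φ.2 + Γ₂ φ.1))
      ↔ Function.Bijective ⇑U := by
    constructor
    · intro hL
      constructor
      · intro a b hab
        have hab' : U (a - b) = 0 := by
          simp only [hU, LinearMap.sub_apply, Module.End.mul_apply, Module.End.one_apply,
            map_sub] at hab ⊢
          rw [sub_eq_zero]
          abel_nf
          abel_nf at hab
          linear_combination (norm := abel) hab
        have h0 : (fun φ : X × X => (φ.1 + Γ₁ φ.2, φ.2 + Γ₂ φ.1)) (a - b, -Γ₂ (a - b))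
            = (fun φ : X × X => (φ.1 + Γ₁ φ.2, φ.2 + Γ₂ φ.1)) (0, 0) := by
          simp only [hU, LinearMap.sub_apply, Module.End.mul_apply, Module.End.one_apply] at hab'
          simp only [map_neg, map_zero, add_zero, zero_add, neg_add_cancel]
          rw [Prod.mk.injEq]
          refine ⟨?_, rfl⟩
          calc a - b + -Γ₁ (Γ₂ (a - b)) = a - b - Γ₁ (Γ₂ (a - b)) := by abel
            _ = 0 := hab'
        have := hL.injective h0
        have h1 : a - b = 0 := congrArg Prod.fst this
        exact sub_eq_zero.mp h1
      · intro y
        obtain ⟨φ, hφ⟩ := hL.surjective (y, 0)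
        have h1 : φ.1 + Γ₁ φ.2 = y := congrArg Prod.fst hφ
        have h2 : φ.2 + Γ₂ φ.1 = 0 := congrArg Prod.snd hφ
        refine ⟨φ.1, ?_⟩
        simp only [hU, LinearMap.sub_apply, Module.End.mul_apply, Module.End.one_apply]
        have h2' : φ.2 = -Γ₂ φ.1 := by rw [← sub_eq_zero]; rw [← h2]; abel
        rw [← h1, h2', map_neg]
        abel
    · intro hUb
      have hUu : IsUnit U := (Module.End.isUnit_iff U).mpr hUb
      obtain ⟨u, hu⟩ := hUu
      set W : Module.End ℂ X := ↑u⁻¹ with hW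
      have hW1 : ∀ x, W (U x) = x := by
        intro x
        have : W * U = 1 := by rw [hW, ← hu]; exact u.inv_mul
        calc W (U x) = (W * U) x := rfl
          _ = x := by rw [this]; rfl
      have hW2 : ∀ x, U (W x) = x := by
        intro x
        have : U * W = 1 := by rw [hW, ← hu]; exact u.mul_inv
        calc U (W x) = (U * W) x := rfl
          _ = x := by rw [this]; rfl
      rw [Function.bijective_iff_has_inverse]
      refine ⟨fun ψ => (W (ψ.1 - Γ₁ ψ.2), ψ.2 - Γ₂ (W (ψ.1 - Γ₁ ψ.2))), ?_, ?_⟩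
      · intro φ
        simp only
        have harg : φ.1 + Γ₁ φ.2 - Γ₁ (φ.2 + Γ₂ φ.1) = U φ.1 := by
          simp only [hU, LinearMap.sub_apply, Module.End.mul_apply, Module.End.one_apply, map_add]
          abel
        rw [harg, hW1]
        rw [Prod.mk.injEq]
        exact ⟨rfl, by abel⟩
      · intro ψ
        simp only
        set t := W (ψ.1 - Γ₁ ψ.2) with ht
        have h2 : ψ.2 - Γ₂ t + Γ₂ t = ψ.2 := by abel
        have h1 : t + Γ₁ (ψ.2 - Γ₂ t) = ψ.1 := by
          have hx := hW2 (ψ.1 - Γ₁ ψ.2)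
          rw [← ht] at hx
          simp only [hU, LinearMap.sub_apply, Module.End.mul_apply, Module.End.one_apply] at hx
          rw [map_sub]
          rw [← sub_eq_zero]
          rw [← sub_eq_zero] at hx
          linear_combination (norm := abel) hx
        rw [Prod.mk.injEq]
        exact ⟨h1, h2⟩
  refine ⟨main, fun hL => ?_⟩
  have hUu : IsUnit U := (Module.End.isUnit_iff U).mpr (main.mp hL)
  have hA : IsUnit (1 - G₁) := ⟨⟨1 - G₁, 1 - Γ₁, h₁.1, h₁.2⟩, rfl⟩
  have hB : IsUnit (1 - G₂) := ⟨⟨1 - G₂, 1 - Γ₂, h₂.1, h₂.2⟩, rfl⟩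
  have hM : IsUnit (1 - (G₁ + G₂) : Module.End ℂ X) := by
    rw [← key]; exact (hA.mul hUu).mul hB
  refine ⟨(Module.End.isUnit_iff _).mp hM, ?_⟩
  intro Γtot W hΓ1 hΓ2 hW1 hW2
  have hMV : (1 - (G₁ + G₂)) * ((1 - Γ₂) * W * (1 - Γ₁)) = 1 := by
    rw [← key]
    calc (1 - G₁) * U * (1 - G₂) * ((1 - Γ₂) * W * (1 - Γ₁))
        = (1 - G₁) * (U * (((1 - G₂) * (1 - Γ₂)) * (W * (1 - Γ₁)))) := by noncomm_ring
      _ = (1 - G₁) * (U * (W * (1 - Γ₁))) := by rw [h₂.1, one_mul]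
      _ = (1 - G₁) * ((U * W) * (1 - Γ₁)) := by rw [mul_assoc]
      _ = (1 - G₁) * (1 - Γ₁) := by rw [hW1, one_mul]
      _ = 1 := h₁.1
  exact left_inv_eq_right_inv hΓ2 hMV
end

section
/- Suppose the operator norm of the block matrix 𝚪 : X^n → X^n, (𝚪φ)_i = Γ_i Σ_{k≠i} φ_k (zero diagonal, all off-diagonal entries of row i equal to Γ_i), is strictly less than 1, where X^n carries the norm ‖φ‖ = max_i ‖φ_i‖. Then I − G is bijective and the operator Γ defined by I − Γ = (I − G)^{−1} is given by the norm-convergent alternating series over chains of pairwise distinct neighbouring indices: Γ = Σ_i Γ_i − Σ_{i≠j} Γ_i Γ_j + Σ_{i≠j, j≠k} Γ_i Γ_j Γ_k − … , i.e. Γ = Σ_{m=1}^∞ (−1)^{m+1} Σ_{i₁≠i₂, i₂≠i₃, …, i_{m−1}≠i_m} Γ_{i₁} Γ_{i₂} ⋯ Γ_{i_m}. -/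
/-!
Let `𝚪` act on `n`-tuples of operators by `(𝚪 u) i = Γ i * ∑_{k ≠ i} u k` (`coupling`); evaluating
at a point shows `‖𝚪‖ ≤ ‖Γmat‖ < 1`. The iterates `𝚪^m Γ` expand into products along chains with
distinct neighbours, so the series is `T = ∑ i, S i` for the Neumann solution `S = (1 + 𝚪)⁻¹ Γ`.
Since `G i Γ i = Γ i G i = G i + Γ i`, the equation `S + 𝚪 S = Γ` gives `G T = G + T` directly, and
`T G = T + G` because `S G` and `S + G` solve the same equation, `𝚪` commuting with right
multiplication. Hence `1 - T` is the two-sided inverse of `1 - G`.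
-/

open Finset

namespace MultipleReflection

def chains (n m : ℕ) : Finset (Fin (m + 1) → Fin n) :=
  univ.filter fun c => ∀ l : Fin m, c l.castSucc ≠ c l.succ

variable {n : ℕ}

lemma mem_chains {m : ℕ} {c : Fin (m + 1) → Fin n} :
    c ∈ chains n m ↔ ∀ l : Fin m, c l.castSucc ≠ c l.succ := by
  simp [chains]

lemma cons_mem_chains {m : ℕ} {j : Fin n} {c : Fin (m + 1) → Fin n} :
    Fin.cons j c ∈ chains n (m + 1) ↔ j ≠ c 0 ∧ c ∈ chains n m := by
  simp [mem_chains, Fin.forall_fin_succ]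

lemma sum_chains_succ_filter_eq {M : Type*} [AddCommMonoid M] (m : ℕ) (j : Fin n)
    (F : (Fin (m + 2) → Fin n) → M) :
    ∑ c ∈ chains n (m + 1) with c 0 = j, F c =
      ∑ c ∈ chains n m with j ≠ c 0, F (Fin.cons j c) := by
  symm
  refine sum_nbij' (fun c : Fin (m + 1) → Fin n => (Fin.cons j c : Fin (m + 2) → Fin n))
    Fin.tail (fun c hc => ?_) (fun c hc => ?_) (fun c _ => Fin.tail_cons _ _) (fun c hc => ?_)
    (fun _ _ => rfl)
  · rw [mem_filter] at hc ⊢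
    exact ⟨cons_mem_chains.2 hc.symm, rfl⟩
  · obtain ⟨hchain, rfl⟩ := mem_filter.1 hc
    rw [← Fin.cons_self_tail c, cons_mem_chains] at hchain
    exact mem_filter.2 hchain.symm
  · obtain ⟨-, rfl⟩ := mem_filter.1 hc
    exact Fin.cons_self_tail c

section Coupling

variable {R : Type*}

def coupling [NonUnitalNonAssocSemiring R] (Γ u : Fin n → R) : Fin n → R :=
  fun i => Γ i * ∑ k ∈ univ.erase i, u k

lemma coupling_iterate_apply [Semiring R] (Γ : Fin n → R) (m : ℕ) (i : Fin n) :
    (coupling Γ)^[m] Γ i = ∑ c ∈ chains n m with c 0 = i, (List.ofFn fun l => Γ (c l)).prod := by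
  induction m generalizing i with
  | zero =>
    have : {c ∈ chains n 0 | c 0 = i} = {fun _ => i} := by
      ext c
      simp [mem_chains, funext_iff, Fin.forall_fin_one]
    simp [this]
  | succ m ih =>
    rw [Function.iterate_succ_apply', coupling, sum_chains_succ_filter_eq]
    simp_rw [ih, sum_fiberwise_eq_sum_filter, mul_sum, List.ofFn_succ, List.prod_cons,
      Fin.cons_zero, Fin.cons_succ, mem_erase, ne_comm, mem_univ, and_true]

lemma sum_coupling_iterate [Semiring R] (Γ : Fin n → R) (m : ℕ) :
    ∑ i, (coupling Γ)^[m] Γ i = ∑ c ∈ chains n m, (List.ofFn fun l => Γ (c l)).prod := by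
  simp_rw [coupling_iterate_apply]
  exact sum_fiberwise _ _ _

lemma coupling_add [NonUnitalNonAssocSemiring R] (Γ u v : Fin n → R) :
    coupling Γ (u + v) = coupling Γ u + coupling Γ v := by
  ext i
  simp [coupling, sum_add_distrib, mul_add]

lemma coupling_mul_const [NonUnitalSemiring R] (Γ u : Fin n → R) (b : R) :
    coupling Γ (fun i => u i * b) = fun i => coupling Γ u i * b := by
  ext i
  simp [coupling, ← sum_mul, mul_assoc]

end Coupling

section Ring

variable {R : Type*} [Ring R]

lemma one_sub_mul_one_sub_eq_one_iff {a b : R} : (1 - a) * (1 - b) = 1 ↔ a * b = a + b := by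
  rw [show (1 - a) * (1 - b) = 1 - (a + b - a * b) by noncomm_ring, sub_eq_self, sub_eq_zero,
    eq_comm]

variable {G Γ S : Fin n → R}

lemma sum_mul_sum_eq_add_of_add_coupling_eq (hGΓ : ∀ i, G i * Γ i = G i + Γ i)
    (hS : S + coupling Γ S = Γ) : (∑ i, G i) * ∑ i, S i = ∑ i, G i + ∑ i, S i := by
  rw [sum_mul, ← sum_add_distrib]
  refine sum_congr rfl fun i _ => ?_
  have hSi : S i = Γ i * (1 - ∑ k ∈ univ.erase i, S k) := by
    rw [mul_sub, mul_one]
    exact eq_sub_of_add_eq (congr_fun hS i)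
  calc G i * ∑ k, S k
        = G i * Γ i * (1 - ∑ k ∈ univ.erase i, S k) + G i * ∑ k ∈ univ.erase i, S k := by
        rw [← add_sum_erase _ _ (mem_univ i), mul_add, hSi, mul_assoc]
    _ = G i + S i := by rw [hGΓ, hSi]; noncomm_ring

lemma sum_mul_sum_eq_add_of_add_coupling_eq' (hΓG : ∀ i, Γ i * G i = Γ i + G i)
    (hinj : Function.Injective fun u => u + coupling Γ u) (hS : S + coupling Γ S = Γ) :
    (∑ i, S i) * ∑ i, G i = ∑ i, S i + ∑ i, G i := by
  suffices (fun i => S i * ∑ k, G k) = S + G by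
    rw [sum_mul, ← sum_add_distrib]
    exact sum_congr rfl fun i _ => congr_fun this i
  apply hinj
  ext i
  have hSi := congr_fun hS i
  have hΓi : Γ i * ∑ k, G k = Γ i + G i + coupling Γ G i := by
    rw [← add_sum_erase _ _ (mem_univ i), mul_add, hΓG, coupling]
  simp only [coupling_add, coupling_mul_const, Pi.add_apply] at hSi ⊢
  rw [← add_mul, hSi, hΓi, ← hSi]
  abel

end Ring

section Banach

variable (𝕜 : Type*) {A : Type*} [NontriviallyNormedField 𝕜] [NormedRing A] [NormedAlgebra 𝕜 A]

noncomputable def couplingL (Γ : Fin n → A) : (Fin n → A) →L[𝕜] Fin n → A :=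
  ContinuousLinearMap.pi fun i =>
    ContinuousLinearMap.mul 𝕜 A (Γ i) ∘L ∑ k ∈ univ.erase i, ContinuousLinearMap.proj k

variable {𝕜}

@[simp]
lemma coe_couplingL (Γ : Fin n → A) : ⇑(couplingL 𝕜 Γ) = coupling Γ := by
  ext u i
  simp [couplingL, coupling, mul_sum, mul_sub]

lemma neg_couplingL_pow_apply (Γ u : Fin n → A) (m : ℕ) :
    ((-couplingL 𝕜 Γ) ^ m) u = (-1 : 𝕜) ^ m • (coupling Γ)^[m] u := by
  induction m with
  | zero => simp
  | succ m ih =>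
    simp only [pow_succ', mul_apply_eq_comp, ih, neg_apply, map_smul, coe_couplingL,
      Function.iterate_succ_apply', neg_one_mul, neg_smul, smul_neg]

variable [CompleteSpace A] {Γ : Fin n → A}

lemma injective_add_coupling (h : ‖couplingL 𝕜 Γ‖ < 1) :
    Function.Injective fun u => u + coupling Γ u := by
  have hN := geom_series_mul_neg (-couplingL 𝕜 Γ) ((norm_neg (couplingL 𝕜 Γ)).trans_lt h)
  refine Function.LeftInverse.injective (g := ⇑(∑' m : ℕ, (-couplingL 𝕜 Γ) ^ m)) fun u => ?_
  simpa using congr($hN u)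

lemma exists_add_coupling_eq_hasSum (h : ‖couplingL 𝕜 Γ‖ < 1) (v : Fin n → A) :
    ∃ S, S + coupling Γ S = v ∧ HasSum (fun m => (-1 : 𝕜) ^ m • (coupling Γ)^[m] v) S := by
  have hneg : ‖-couplingL 𝕜 Γ‖ < 1 := (norm_neg (couplingL 𝕜 Γ)).trans_lt h
  have hN := mul_neg_geom_series (-couplingL 𝕜 Γ) hneg
  refine ⟨(∑' m, (-couplingL 𝕜 Γ) ^ m) v, by simpa using congr($hN v), ?_⟩
  have hsum := (ContinuousLinearMap.apply 𝕜 (Fin n → A) v).hasSum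
    (summable_geometric_of_norm_lt_one hneg).hasSum
  simpa only [ContinuousLinearMap.apply_apply, neg_couplingL_pow_apply] using hsum

theorem exists_hasSum_chains_of_norm_couplingL_lt_one {G : Fin n → A}
    (hΓ : ∀ i, (1 - G i) * (1 - Γ i) = 1 ∧ (1 - Γ i) * (1 - G i) = 1)
    (h : ‖couplingL 𝕜 Γ‖ < 1) :
    ∃ T, (1 - ∑ i, G i) * (1 - T) = 1 ∧ (1 - T) * (1 - ∑ i, G i) = 1 ∧
      HasSum (fun m => (-1 : 𝕜) ^ m • ∑ c ∈ chains n m, (List.ofFn fun l => Γ (c l)).prod) T := by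
  obtain ⟨S, hS, hsum⟩ := exists_add_coupling_eq_hasSum h Γ
  refine ⟨∑ i, S i, ?_, ?_, ?_⟩
  · exact one_sub_mul_one_sub_eq_one_iff.2 <| sum_mul_sum_eq_add_of_add_coupling_eq
      (fun i => one_sub_mul_one_sub_eq_one_iff.1 (hΓ i).1) hS
  · exact one_sub_mul_one_sub_eq_one_iff.2 <| sum_mul_sum_eq_add_of_add_coupling_eq'
      (fun i => one_sub_mul_one_sub_eq_one_iff.1 (hΓ i).2) (injective_add_coupling h) hS
  · simpa only [← sum_coupling_iterate, smul_sum, Pi.smul_apply] using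
      hasSum_sum (s := univ) fun i _ => Pi.hasSum.1 hsum i

end Banach

lemma norm_couplingL_le {𝕜 X : Type*} [NontriviallyNormedField 𝕜] [NormedAddCommGroup X]
    [NormedSpace 𝕜 X] (Γ : Fin n → X →L[𝕜] X) (Γmat : (Fin n → X) →L[𝕜] Fin n → X)
    (hΓmat : ∀ φ i, Γmat φ i = Γ i (∑ k ∈ univ.erase i, φ k)) :
    ‖couplingL 𝕜 Γ‖ ≤ ‖Γmat‖ := by
  refine ContinuousLinearMap.opNorm_le_bound _ (norm_nonneg _) fun u => ?_
  refine (pi_norm_le_iff_of_nonneg (by positivity)).2 fun i => ?_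
  refine ContinuousLinearMap.opNorm_le_bound _ (by positivity) fun x => ?_
  have hux : ‖fun k => u k x‖ ≤ ‖u‖ * ‖x‖ :=
    (pi_norm_le_iff_of_nonneg (by positivity)).2 fun k =>
      ((u k).le_opNorm x).trans (by gcongr; exact norm_le_pi_norm u k)
  calc ‖couplingL 𝕜 Γ u i x‖ = ‖Γmat (fun k => u k x) i‖ := by
        simp [coupling, hΓmat]
    _ ≤ ‖Γmat (fun k => u k x)‖ := norm_le_pi_norm _ i
    _ ≤ ‖Γmat‖ * ‖fun k => u k x‖ := Γmat.le_opNorm _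
    _ ≤ ‖Γmat‖ * ‖u‖ * ‖x‖ := by rw [mul_assoc]; gcongr

end MultipleReflection

theorem stmt_5_general {X : Type*} [NormedAddCommGroup X] [NormedSpace ℂ X] [CompleteSpace X]
    (n : ℕ) (G Γ : Fin n → X →L[ℂ] X)
    (hΓ : ∀ i, (1 - G i) * (1 - Γ i) = 1 ∧ (1 - Γ i) * (1 - G i) = 1)
    (Γmat : (Fin n → X) →L[ℂ] (Fin n → X))
    (hΓmat : ∀ (φ : Fin n → X) (i : Fin n), Γmat φ i = Γ i (∑ k ∈ Finset.univ.erase i, φ k))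
    (hnorm : ‖Γmat‖ < 1) :
    Function.Bijective ⇑(1 - ∑ i, G i : X →L[ℂ] X)
    ∧ ∀ Γtot : X →L[ℂ] X,
        (1 - ∑ i, G i) * (1 - Γtot) = 1 → (1 - Γtot) * (1 - ∑ i, G i) = 1 →
        HasSum (fun m : ℕ => ((-1 : ℂ) ^ m) •
          ∑ c ∈ Finset.univ.filter
            (fun c : Fin (m + 1) → Fin n => ∀ l : Fin m, c l.castSucc ≠ c l.succ),
            (List.ofFn (fun l : Fin (m + 1) => Γ (c l))).prod) Γtot := by
  obtain ⟨T, hright, hleft, hT⟩ :=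
    MultipleReflection.exists_hasSum_chains_of_norm_couplingL_lt_one hΓ
      ((MultipleReflection.norm_couplingL_le Γ Γmat hΓmat).trans_lt hnorm)
  refine ⟨ContinuousLinearMap.isUnit_iff_bijective.1 ⟨⟨_, _, hright, hleft⟩, rfl⟩,
    fun Γtot _ h₂ => ?_⟩
  obtain rfl : Γtot = T := sub_right_injective (left_inv_eq_right_inv h₂ hright)
  exact hT

/-- Let `X` be a complex Banach space, `G i : X →L[ℂ] X` bounded with
`I - G i` boundedly invertible and reflection operators `Γ i` given by
`I - Γ i = (I - G i)⁻¹`.  If the block matrix `Γmat : Xⁿ → Xⁿ`,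
`(Γmat φ) i = Γ i (∑_{k ≠ i} φ k)` (zero diagonal, off-diagonal entries of row `i` equal
`Γ i`), has operator norm `< 1` (with `Xⁿ` carrying the sup-norm), then `I - G` is
bijective (`G = ∑ i, G i`) and the reflection operator `Γ`, `I - Γ = (I - G)⁻¹`,
is the sum of the norm-convergent alternating series over chains with pairwise
distinct neighbouring indices:
`Γ = ∑ i, Γ i - ∑_{i ≠ j} Γ i Γ j + ∑_{i ≠ j, j ≠ k} Γ i Γ j Γ k - …`. -/
theorem stmt_5 {X : Type*} [NormedAddCommGroup X] [NormedSpace ℂ X] [CompleteSpace X]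
    (n : ℕ) (hn : 1 ≤ n) (G Γ : Fin n → X →L[ℂ] X)
    (hΓ : ∀ i, (1 - G i) * (1 - Γ i) = 1 ∧ (1 - Γ i) * (1 - G i) = 1)
    (Γmat : (Fin n → X) →L[ℂ] (Fin n → X))
    (hΓmat : ∀ (φ : Fin n → X) (i : Fin n), Γmat φ i = Γ i (∑ k ∈ Finset.univ.erase i, φ k))
    (hnorm : ‖Γmat‖ < 1) :
    Function.Bijective ⇑(1 - ∑ i, G i : X →L[ℂ] X)
    ∧ ∀ Γtot : X →L[ℂ] X,
        (1 - ∑ i, G i) * (1 - Γtot) = 1 → (1 - Γtot) * (1 - ∑ i, G i) = 1 →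
        HasSum (fun m : ℕ => ((-1 : ℂ) ^ m) •
          ∑ c ∈ Finset.univ.filter
            (fun c : Fin (m + 1) → Fin n => ∀ l : Fin m, c l.castSucc ≠ c l.succ),
            (List.ofFn (fun l : Fin (m + 1) => Γ (c l))).prod) Γtot :=
  stmt_5_general n G Γ hΓ Γmat hΓmat hnorm
end

section
/- Suppose φ₁, φ₂, φ₃ ∈ X satisfy Γ_i(φ_j + φ_k) = −φ_i for every even permutation (i,j,k) of (1,2,3). Then, setting φ = φ₁ + φ₂ + φ₃, one has G_i φ = φ_i for each i, and consequently Gφ = φ, where G = G₁ + G₂ + G₃. In particular, if −1 is an eigenvalue of the block matrix operator (φ₁,φ₂,φ₃) ↦ (Γ₁(φ₂+φ₃), Γ₂(φ₃+φ₁), Γ₃(φ₁+φ₂)) with eigenvector (φ₁,φ₂,φ₃) ≠ 0, then 1 is an eigenvalue of G. -/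
lemma stmt6_aux {X : Type*} [AddCommGroup X] [Module ℂ X]
    (G Γ : Module.End ℂ X) (h : (1 - G) * (1 - Γ) = 1)
    (a b : X) (e : Γ a = -b) : G (a + b) = b := by
  have h1 : (1 - Γ) a = a + b := by
    simp [LinearMap.sub_apply, e, sub_neg_eq_add]
  have h2 : (1 - G) (a + b) = a := by
    rw [← h1]
    have := congrArg (fun f : Module.End ℂ X => f a) h
    simpa [Module.End.mul_apply] using this
  have : (a + b) - G (a + b) = a := by simpa [LinearMap.sub_apply] using h2
  linear_combination (norm := abel) -this

/-- Let `X` be a complex vector space and, for `i = 1,2,3`, `Gᵢ` linear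
with `I - Gᵢ` bijective and reflection operators `Γᵢ` given by `I - Γᵢ = (I - Gᵢ)⁻¹`.
If `φ₁, φ₂, φ₃ ∈ X` satisfy `Γᵢ (φⱼ + φₖ) = -φᵢ` for every even permutation `(i,j,k)`
of `(1,2,3)`, then with `φ = φ₁ + φ₂ + φ₃` one has `Gᵢ φ = φᵢ` for each `i`, hence
`G φ = φ` with `G = G₁ + G₂ + G₃`; in particular if `(φ₁,φ₂,φ₃) ≠ 0` then `φ ≠ 0`,
so `1` is an eigenvalue of `G`. -/
theorem stmt_6 {X : Type*} [AddCommGroup X] [Module ℂ X]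
    (G₁ G₂ G₃ Γ₁ Γ₂ Γ₃ : Module.End ℂ X)
    (h₁ : (1 - G₁) * (1 - Γ₁) = 1 ∧ (1 - Γ₁) * (1 - G₁) = 1)
    (h₂ : (1 - G₂) * (1 - Γ₂) = 1 ∧ (1 - Γ₂) * (1 - G₂) = 1)
    (h₃ : (1 - G₃) * (1 - Γ₃) = 1 ∧ (1 - Γ₃) * (1 - G₃) = 1)
    (φ₁ φ₂ φ₃ : X)
    (e₁ : Γ₁ (φ₂ + φ₃) = -φ₁) (e₂ : Γ₂ (φ₃ + φ₁) = -φ₂) (e₃ : Γ₃ (φ₁ + φ₂) = -φ₃) :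
    G₁ (φ₁ + φ₂ + φ₃) = φ₁ ∧ G₂ (φ₁ + φ₂ + φ₃) = φ₂ ∧ G₃ (φ₁ + φ₂ + φ₃) = φ₃
    ∧ (G₁ + G₂ + G₃) (φ₁ + φ₂ + φ₃) = φ₁ + φ₂ + φ₃
    ∧ (¬(φ₁ = 0 ∧ φ₂ = 0 ∧ φ₃ = 0) → φ₁ + φ₂ + φ₃ ≠ 0) := by
  have k₁ : G₁ (φ₁ + φ₂ + φ₃) = φ₁ := by
    have := stmt6_aux G₁ Γ₁ h₁.1 (φ₂ + φ₃) φ₁ e₁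
    rw [show φ₁ + φ₂ + φ₃ = φ₂ + φ₃ + φ₁ by abel]; exact this
  have k₂ : G₂ (φ₁ + φ₂ + φ₃) = φ₂ := by
    have := stmt6_aux G₂ Γ₂ h₂.1 (φ₃ + φ₁) φ₂ e₂
    rw [show φ₁ + φ₂ + φ₃ = φ₃ + φ₁ + φ₂ by abel]; exact this
  have k₃ : G₃ (φ₁ + φ₂ + φ₃) = φ₃ := by
    have := stmt6_aux G₃ Γ₃ h₃.1 (φ₁ + φ₂) φ₃ e₃
    rw [show φ₁ + φ₂ + φ₃ = φ₁ + φ₂ + φ₃ by abel]; exact this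
  refine ⟨k₁, k₂, k₃, by simp [LinearMap.add_apply, k₁, k₂, k₃], ?_⟩
  intro hne h0
  exact hne ⟨by rw [← k₁, h0]; simp, by rw [← k₂, h0]; simp, by rw [← k₃, h0]; simp⟩
end
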